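/- Let ℓ, n, k ∈ ℕ with k ≤ n ≤ 2^ℓ, let R = k/n, and let 0 ≤ s ≤ n. Let D be the distribution on 𝔽_{2^ℓ}ⁿ obtained as follows: sample a uniform codeword c of the Reed–Solomon code over 𝔽_{2^ℓ} with dimension k and block length n (i.e., the encoding of a uniformly random message in 𝔽_{2^ℓ}^k); sample a uniformly random subset S ⊆ {1,…,n} with |S| = s; for each i ∈ S replace cᵢ by an independent uniformly random element of 𝔽_{2^ℓ}; output the result. Then D is (1 − R)^s-small-biased. -/

import Mathlib

open Finset

/-- `(-1)^(Tr y)` where `Tr : 𝔽_{2^ℓ} → 𝔽₂`, `Tr y = y + y² + y⁴ + ⋯ + y^(2^(ℓ-1))`,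
is the field trace (which takes values in {0,1}). -/
def chr {F : Type*} [Field F] [DecidableEq F] (ℓ : ℕ) (y : F) : ℝ :=
  if (∑ i ∈ Finset.range ℓ, y ^ (2 ^ i)) = 0 then 1 else -1

/-- `bias(X, α) = |E_{x←X} (-1)^(Tr ⟨x,α⟩)|`. -/
noncomputable def bias {F : Type*} [Field F] [DecidableEq F] [Fintype F] (ℓ n : ℕ)
    (p : (Fin n → F) → ℝ) (α : Fin n → F) : ℝ :=
  |∑ x, p x * chr ℓ (∑ i, x i * α i)|

/-- Reed–Solomon encoding with dimension `k`, block length `n` and (distinct)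
evaluation points `a : Fin n → F`:  `m ↦ (f_m(a₁), …, f_m(a_n))`. -/
def rsEnc {F : Type*} [Field F] (k n : ℕ) (a : Fin n → F) (m : Fin k → F) : Fin n → F :=
  fun i => ∑ j : Fin k, m j * a i ^ (j : ℕ)

/-!
The character `y ↦ (-1)^(Tr y)` behind `chr` is the sign character of `ZMod 2` composed with the
trace `F → ZMod 2` (the sum in `chr` is the explicit formula for that trace), so it is a
nontrivial additive character `ψ` of `F`. Under the noisy distribution the expectation of
`ψ ⟨w, α⟩` factors: averaging over the fresh symbols on `S` kills it unless `α` vanishes on `S`,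
and averaging over the message then kills it unless `∑ᵢ aᵢ^j αᵢ = 0` for all `j < k`, i.e. unless
`α` is a dual codeword. A nonzero dual codeword has more than `k` nonzero entries (Vandermonde), so
`α` has `z ≤ n - k` zeros and the bias is the probability that a uniform `s`-set avoids the
support of `α`: `C(z, s) / C(n, s) ≤ (z / n)^s ≤ (1 - R)^s`.
-/

theorem charP_two_of_card_eq_two_pow {F : Type*} [Field F] [Fintype F] {ℓ : ℕ}
    (hF : Fintype.card F = 2 ^ ℓ) : CharP F 2 := by
  have hℓ : ℓ ≠ 0 := by
    rintro rfl
    exact (Fintype.one_lt_card (α := F)).ne' hF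
  exact ringChar.of_eq (FiniteField.even_card_iff_char_two.2 (by simp [hF, Nat.pos_of_ne_zero hℓ]))

theorem exists_addChar_ne_zero_coe_eq_chr {F : Type*} [Field F] [Fintype F] [DecidableEq F]
    {ℓ : ℕ} (hF : Fintype.card F = 2 ^ ℓ) : ∃ ψ : AddChar F ℝ, ψ ≠ 0 ∧ ⇑ψ = chr ℓ := by
  have := charP_two_of_card_eq_two_pow hF
  let := ZMod.algebra F 2
  have hfinrank : Module.finrank (ZMod 2) F = ℓ := by
    have hcard := Module.card_eq_pow_finrank (K := ZMod 2) (V := F)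
    rw [hF, ZMod.card] at hcard
    exact (Nat.pow_right_injective le_rfl hcard).symm
  let sign : AddChar (ZMod 2) ℝ := AddChar.zmodChar 2 (ζ := (-1 : ℝ)) (by norm_num)
  have hsign (t : ZMod 2) : sign t = if t = 0 then 1 else -1 := by
    obtain rfl | rfl : t = 0 ∨ t = 1 := by revert t; decide
    · simp [sign]
    · simp [sign, AddChar.zmodChar_apply, show ZMod.val (1 : ZMod 2) = 1 from rfl]
  refine ⟨sign.compAddMonoidHom (Algebra.trace (ZMod 2) F).toAddMonoidHom, ?_, ?_⟩
  · obtain ⟨x, hx⟩ := Algebra.trace_surjective (ZMod 2) F 1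
    refine AddChar.ne_zero_iff.2 ⟨x, ?_⟩
    rw [AddChar.compAddMonoidHom_apply, LinearMap.toAddMonoidHom_coe, hx, hsign]
    norm_num
  · funext x
    have htrace : algebraMap (ZMod 2) F (Algebra.trace (ZMod 2) F x) =
        ∑ i ∈ range ℓ, x ^ 2 ^ i := by
      rw [FiniteField.algebraMap_trace_eq_sum_pow, hfinrank, Nat.card_zmod]
    simp only [chr, ← htrace, map_eq_zero_iff _ (algebraMap (ZMod 2) F).injective]
    exact hsign _

section CharacterSums

variable {F R ι : Type*} [Field F] [Fintype F] [DecidableEq F] [CommRing R] [IsDomain R]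
  [Fintype ι] [DecidableEq ι] (ψ : AddChar F R)

theorem AddChar.sum_apply_sum_mul (hψ : ψ ≠ 0) (γ : ι → F) :
    ∑ v : ι → F, ψ (∑ i, v i * γ i) =
      if γ = 0 then (Fintype.card F : R) ^ Fintype.card ι else 0 := by
  let φ : AddChar (ι → F) R := ψ.compAddMonoidHom
    (AddMonoidHom.mk' (fun v => ∑ i, v i * γ i) fun v w => by
      simp only [Pi.add_apply, add_mul, sum_add_distrib])
  have hφ : φ = 0 ↔ γ = 0 := by
    refine ⟨fun h => ?_, fun h => by ext v; simp [φ, h]⟩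
    by_contra hγ
    obtain ⟨i, hi⟩ : ∃ i, γ i ≠ 0 := by simpa [funext_iff] using hγ
    obtain ⟨x, hx⟩ := AddChar.ne_zero_iff.1 hψ
    apply hx
    simpa [φ, Pi.single_apply, hi] using DFunLike.congr_fun h (Pi.single i (x / γ i))
  have hsum := φ.sum_eq_ite
  simp only [hφ, Fintype.card_fun, Nat.cast_pow] at hsum
  exact hsum

theorem AddChar.sum_apply_sum_ite_mul (hψ : ψ ≠ 0) (S : Finset ι) (c α : ι → F) :
    ∑ e : ι → F, ψ (∑ i, (if i ∈ S then e i else c i) * α i) =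
      if ∀ i ∈ S, α i = 0 then (Fintype.card F : R) ^ Fintype.card ι * ψ (∑ i, c i * α i)
      else 0 := by
  have hsplit (e : ι → F) : ψ (∑ i, (if i ∈ S then e i else c i) * α i) =
      ψ (∑ i, e i * S.piecewise α 0 i) * ψ (∑ i, (if i ∈ S then 0 else c i) * α i) := by
    rw [← ψ.map_add_eq_mul, ← sum_add_distrib]
    refine congr_arg ψ (sum_congr rfl fun i _ => ?_)
    by_cases hi : i ∈ S <;> simp [hi]
  have hvanish : S.piecewise α 0 = 0 ↔ ∀ i ∈ S, α i = 0 := by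
    refine ⟨fun h i hi => by simpa [hi] using congr_fun h i, fun h => funext fun i => ?_⟩
    by_cases hi : i ∈ S
    · simp [hi, h i hi]
    · simp [hi]
  rw [sum_congr rfl fun e _ => hsplit e, ← sum_mul, ψ.sum_apply_sum_mul hψ]
  simp only [hvanish]
  split_ifs with h
  · congr 2
    refine sum_congr rfl fun i _ => ?_
    by_cases hi : i ∈ S <;> simp [hi, h]
  · rw [zero_mul]

end CharacterSums

theorem sum_rsEnc_mul {F : Type*} [Field F] {k n : ℕ} (a : Fin n → F) (m : Fin k → F)
    (β : Fin n → F) :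
    ∑ i, rsEnc k n a m i * β i = ∑ j, m j * ∑ i, a i ^ (j : ℕ) * β i := by
  simp only [rsEnc, sum_mul, mul_sum, mul_assoc]
  exact sum_comm

theorem AddChar.sum_apply_sum_rsEnc_mul {F R : Type*} [Field F] [Fintype F] [DecidableEq F]
    [CommRing R] [IsDomain R] (ψ : AddChar F R) (hψ : ψ ≠ 0) {k n : ℕ} (a α : Fin n → F) :
    ∑ m : Fin k → F, ψ (∑ i, rsEnc k n a m i * α i) =
      if ∀ j : Fin k, ∑ i, a i ^ (j : ℕ) * α i = 0 then (Fintype.card F : R) ^ k else 0 := by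
  simp_rw [sum_rsEnc_mul, ψ.sum_apply_sum_mul hψ, funext_iff, Pi.zero_apply, Fintype.card_fin]

theorem AddChar.sum_sum_apply_sum_ite_rsEnc_mul {F R : Type*} [Field F] [Fintype F]
    [DecidableEq F] [CommRing R] [IsDomain R] (ψ : AddChar F R) (hψ : ψ ≠ 0) {k n : ℕ}
    (a α : Fin n → F) (S : Finset (Fin n)) :
    ∑ m : Fin k → F, ∑ e : Fin n → F, ψ (∑ i, (if i ∈ S then e i else rsEnc k n a m i) * α i) =
      if ∀ i ∈ S, α i = 0 then
        (if ∀ j : Fin k, ∑ i, a i ^ (j : ℕ) * α i = 0 then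
          (Fintype.card F : R) ^ n * (Fintype.card F : R) ^ k else 0) else 0 := by
  simp_rw [ψ.sum_apply_sum_ite_mul hψ, Fintype.card_fin]
  by_cases hS : ∀ i ∈ S, α i = 0
  · simp only [if_pos hS, ← mul_sum, ψ.sum_apply_sum_rsEnc_mul hψ, mul_ite, mul_zero]
  · simp only [if_neg hS, sum_const_zero]

theorem lt_card_filter_ne_zero_of_sum_pow_mul_eq_zero {F : Type*} [Field F] [DecidableEq F]
    {n k : ℕ} {a α : Fin n → F} (ha : Function.Injective a) (hα : α ≠ 0)
    (hdual : ∀ j : Fin k, ∑ i, a i ^ (j : ℕ) * α i = 0) :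
    k < #{i | α i ≠ 0} := by
  set T : Finset (Fin n) := {i | α i ≠ 0}
  by_contra! hTk
  let e := T.equivFin.symm
  have hvandermonde (r : Fin #T) : ∑ j, α (e j) * a (e j) ^ (r : ℕ) = 0 := by
    rw [e.sum_comp (fun x => α x * a x ^ (r : ℕ)), sum_coe_sort T (fun x => α x * a x ^ (r : ℕ)),
      sum_filter_of_ne fun i _ hi => left_ne_zero_of_mul hi]
    simpa only [mul_comm] using hdual ⟨r, r.2.trans_le hTk⟩
  have hzero := Matrix.eq_zero_of_forall_pow_sum_mul_pow_eq_zero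
    (ha.comp (Subtype.val_injective.comp e.injective)) hvandermonde
  obtain ⟨i, hi⟩ : ∃ i, α i ≠ 0 := by simpa [funext_iff] using hα
  have hiT : i ∈ T := by simpa [T] using hi
  exact hi (by simpa [e] using congr_fun hzero (T.equivFin ⟨i, hiT⟩))

theorem Finset.sum_sum_sum_ite_eq_mul {X Y Z W : Type*} [Fintype W] [DecidableEq W]
    (s : Finset X) (t : Finset Y) (u : Finset Z) (f : X → Y → Z → W) (c : ℝ) (g : W → ℝ) :
    ∑ w, (∑ x ∈ s, ∑ y ∈ t, ∑ z ∈ u, c * if f x y z = w then 1 else 0) * g w =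
      c * ∑ x ∈ s, ∑ y ∈ t, ∑ z ∈ u, g (f x y z) := by
  simp only [sum_mul, mul_sum, mul_assoc, ite_mul, one_mul, zero_mul]
  rw [sum_comm]
  refine sum_congr rfl fun x _ => ?_
  rw [sum_comm]
  refine sum_congr rfl fun y _ => ?_
  rw [sum_comm]
  refine sum_congr rfl fun z _ => ?_
  simp

theorem Finset.filter_powersetCard_univ_forall_mem {ι : Type*} [Fintype ι] (p : ι → Prop)
    [DecidablePred p] [DecidablePred fun S : Finset ι => ∀ i ∈ S, p i] (s : ℕ) :
    {S ∈ powersetCard s (univ : Finset ι) | ∀ i ∈ S, p i} = powersetCard s {i | p i} := by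
  ext S
  simp [mem_powersetCard, subset_iff, and_comm]

theorem Nat.descFactorial_mul_pow_le {z n : ℕ} (hzn : z ≤ n) (s : ℕ) :
    z.descFactorial s * n ^ s ≤ n.descFactorial s * z ^ s := by
  induction s with
  | zero => simp
  | succ s ih =>
    have hstep : (z - s) * n ≤ (n - s) * z := by
      rw [Nat.sub_mul, Nat.sub_mul, mul_comm n z]
      exact Nat.sub_le_sub_left (Nat.mul_le_mul_left s hzn) _
    calc z.descFactorial (s + 1) * n ^ (s + 1)
        = ((z - s) * n) * (z.descFactorial s * n ^ s) := by
          rw [Nat.descFactorial_succ, pow_succ]; ring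
      _ ≤ ((n - s) * z) * (n.descFactorial s * z ^ s) := Nat.mul_le_mul hstep ih
      _ = n.descFactorial (s + 1) * z ^ (s + 1) := by
          rw [Nat.descFactorial_succ, pow_succ]; ring

theorem choose_div_choose_le_one_sub_div_pow {z k n : ℕ} (hzkn : z + k ≤ n) (s : ℕ) :
    (z.choose s : ℝ) / n.choose s ≤ (1 - (k : ℝ) / n) ^ s := by
  rcases Nat.eq_zero_or_pos n with rfl | hn
  · obtain ⟨rfl, rfl⟩ : z = 0 ∧ k = 0 := by omega
    rcases s with _ | s <;> simp
  have hchoose : z.choose s * n ^ s ≤ n.choose s * z ^ s := by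
    have h := Nat.descFactorial_mul_pow_le (by omega : z ≤ n) s
    rw [Nat.descFactorial_eq_factorial_mul_choose, Nat.descFactorial_eq_factorial_mul_choose,
      mul_assoc, mul_assoc] at h
    exact Nat.le_of_mul_le_mul_left h s.factorial_pos
  have hzn : (z : ℝ) / n ≤ 1 - (k : ℝ) / n := by
    rw [le_sub_iff_add_le, ← add_div, div_le_one (by exact_mod_cast hn)]
    exact_mod_cast hzkn
  refine le_trans ?_ (pow_le_pow_left₀ (by positivity) hzn s)
  rcases Nat.eq_zero_or_pos (n.choose s) with h0 | hpos
  · rw [h0, Nat.cast_zero, div_zero]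
    positivity
  rw [div_pow, div_le_div_iff₀ (by exact_mod_cast hpos) (by positivity), mul_comm ((z : ℝ) ^ s)]
  exact_mod_cast hchoose

theorem noisy_RS_small_biased_general (ℓ n k : ℕ) (hkn : k ≤ n)
    (F : Type*) [Field F] [Fintype F] [DecidableEq F] (hF : Fintype.card F = 2 ^ ℓ)
    (a : Fin n → F) (ha : Function.Injective a)
    (s : ℕ)
    (α : Fin n → F) (hα : α ≠ 0) :
    bias ℓ n
      (fun w =>
        ∑ m : Fin k → F, ∑ S ∈ Finset.powersetCard s (Finset.univ : Finset (Fin n)),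
          ∑ e : Fin n → F,
            ((1 / (Fintype.card F : ℝ) ^ k) * (1 / (n.choose s : ℝ)) *
                (1 / (Fintype.card F : ℝ) ^ n)) *
              (if (fun i => if i ∈ S then e i else rsEnc k n a m i) = w then 1 else 0))
      α ≤ (1 - (k : ℝ) / n) ^ s := by
  obtain ⟨ψ, hψ, hψchr⟩ := exists_addChar_ne_zero_coe_eq_chr hF
  rw [bias, sum_sum_sum_ite_eq_mul, ← hψchr, sum_comm]
  simp only [ψ.sum_sum_apply_sum_ite_rsEnc_mul hψ]
  by_cases hdual : ∀ j : Fin k, ∑ i, a i ^ (j : ℕ) * α i = 0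
  · have hzeros : #{i | α i = 0} + k ≤ n := by
      have hsupport := lt_card_filter_ne_zero_of_sum_pow_mul_eq_zero ha hα hdual
      have hcard := card_filter_add_card_filter_not (s := (univ : Finset (Fin n))) (α · = 0)
      simp only [card_univ, Fintype.card_fin, ← ne_eq] at hcard
      omega
    simp only [if_pos hdual]
    rw [← sum_filter, filter_powersetCard_univ_forall_mem, sum_const, card_powersetCard,
      nsmul_eq_mul]
    calc _ = ((#{i | α i = 0}).choose s : ℝ) / n.choose s := by
          rw [abs_of_nonneg (by positivity)]
          field_simp
      _ ≤ _ := choose_div_choose_le_one_sub_div_pow hzeros s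
  · simp only [if_neg hdual, ite_self, sum_const_zero, mul_zero, abs_zero]
    exact pow_nonneg (sub_nonneg.2 (div_le_one_of_le₀ (by exact_mod_cast hkn) n.cast_nonneg)) s

/-- **Noisy Reed–Solomon codewords are small-biased.**  The distribution obtained by taking
a uniform RS codeword (dimension `k`, block length `n ≤ 2^ℓ`, over a field of order `2^ℓ`)
and replacing the coordinates in a uniformly random size-`s` subset by fresh uniform field
elements is `(1 - R)^s`-small-biased, where `R = k/n`. -/
theorem noisy_RS_small_biased (ℓ n k : ℕ) (hkn : k ≤ n) (hn : n ≤ 2 ^ ℓ)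
    (F : Type*) [Field F] [Fintype F] [DecidableEq F] (hF : Fintype.card F = 2 ^ ℓ)
    (a : Fin n → F) (ha : Function.Injective a)
    (s : ℕ) (hs : s ≤ n)
    (α : Fin n → F) (hα : α ≠ 0) :
    bias ℓ n
      (fun w =>
        ∑ m : Fin k → F, ∑ S ∈ Finset.powersetCard s (Finset.univ : Finset (Fin n)),
          ∑ e : Fin n → F,
            ((1 / (Fintype.card F : ℝ) ^ k) * (1 / (n.choose s : ℝ)) *
                (1 / (Fintype.card F : ℝ) ^ n)) *
              (if (fun i => if i ∈ S then e i else rsEnc k n a m i) = w then 1 else 0))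
      α ≤ (1 - (k : ℝ) / n) ^ s :=
  noisy_RS_small_biased_general ℓ n k hkn F hF a ha s α hα
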